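/- For any integers n ≥ 1, m ≥ 2, and k ≥ 1, if a solution φ on Γ_{n,m} satisfies one-person k-satisficing behavior and converse consistency, then for every game g ∈ Γ_{n,m}, every (k,…,k)-satisficing equilibrium of g belongs to φ(g). -/

import Mathlib

/-! Induction on the number of agents. A single agent is handled by one-person
satisficing behavior. Otherwise, for a `k`-satisficing equilibrium `a` and a proper
coalition `S`, a unilateral deviation of `i ∈ S` in `g^{S,a}` from `a_S` is the same
deviation in `g` from `a`, so `g^{S,a}` again has strict unilateral deviations and `a_S`
is a `k`-satisficing equilibrium of it; by induction `a_S ∈ φ(g^{S,a})`, and converse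
consistency gives `a ∈ φ(g)`. -/

namespace Solutions

/-- A game with agent set `N ⊆ Fin n` (so at most `n` agents) and action set
`A i ⊆ Fin m` (so at most `m` actions) for each agent `i ∈ N`, together with a
total preorder (preference relation) for each agent on the set of action profiles. -/
structure Game (n m : ℕ) where
  N : Finset (Fin n)
  Nne : N.Nonempty
  A : Fin n → Finset (Fin m)
  Atwo : ∀ i ∈ N, 2 ≤ (A i).card
  pref : (i : N) → ((j : N) → A j.1) → ((j : N) → A j.1) → Prop
  total : ∀ i a b, pref i a b ∨ pref i b a
  trans : ∀ i a b c, pref i a b → pref i b c → pref i a c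

variable {n m : ℕ}

/-- The set of action profiles of `g`. -/
abbrev Game.Prof (g : Game n m) := (j : g.N) → g.A j.1

/-- Strict part `≻_i` of agent `i`'s preference relation. -/
def Game.strict (g : Game n m) (i : g.N) (a b : g.Prof) : Prop :=
  g.pref i a b ∧ ¬ g.pref i b a

/-- `rank_i(a | ⪰_i) = 1 + |{x ∈ A_i : (x, a_{-i}) ≻_i (a_i, a_{-i})}|`. -/
noncomputable def Game.rank (g : Game n m) (i : g.N) (a : g.Prof) : ℕ :=
  1 + Nat.card {x : g.A i.1 // g.strict i (Function.update a i x) a}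

/-- The game has strict preferences over unilateral deviations. -/
def Game.StrictUD (g : Game n m) : Prop :=
  ∀ (i : g.N) (a : g.Prof) (x x' : g.A i.1), x ≠ x' →
    (g.strict i (Function.update a i x) (Function.update a i x') ∨
      g.strict i (Function.update a i x') (Function.update a i x))

/-- Extend a profile of the agents in `S` to a profile of `g` by fixing every agent
`j ∉ S` to the action `a j`. -/
def Game.extend (g : Game n m) (S : Finset (Fin n)) (a : g.Prof)
    (b : (j : S) → g.A j.1) : g.Prof :=
  fun j => if h : j.1 ∈ S then b ⟨j.1, h⟩ else a j

/-- The reduced game `g^{S,a}`: agents in `S` play the residual game obtained from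
`g` by fixing each agent `j ∈ N ∖ S` to the action `a j`. -/
def Game.sub (g : Game n m) (S : Finset (Fin n)) (hne : S.Nonempty) (hS : S ⊆ g.N)
    (a : g.Prof) : Game n m where
  N := S
  Nne := hne
  A := g.A
  Atwo := fun i hi => g.Atwo i (hS hi)
  pref := fun i b b' => g.pref ⟨i.1, hS i.2⟩ (g.extend S a b) (g.extend S a b')
  total := fun i b b' => g.total ⟨i.1, hS i.2⟩ _ _
  trans := fun i b b' b'' h h' => g.trans ⟨i.1, hS i.2⟩ _ _ _ h h'

/-- The restriction `a_S` of a profile `a` of `g` to the agents in `S`. -/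
def Game.restrict (g : Game n m) (S : Finset (Fin n)) (hS : S ⊆ g.N) (a : g.Prof) :
    (j : S) → g.A j.1 :=
  fun j => a ⟨j.1, hS j.2⟩

/-- The set of `(k,…,k)`-satisficing equilibria of `g`. -/
def SAT (k : ℕ) (g : Game n m) : Set g.Prof := {a | ∀ i : g.N, g.rank i a ≤ k}

/-- One-person `k`-satisficing behavior: in every single-agent game (in `Γ_{n,m}`,
i.e. with strict unilateral deviations), the solution is the set of profiles at
which the agent is `k`-satisficed. -/
def OnePersonSat (k : ℕ) (φ : (g : Game n m) → Set g.Prof) : Prop :=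
  ∀ g : Game n m, g.StrictUD → g.N.card = 1 →
    φ g = {a : g.Prof | ∀ i : g.N, g.rank i a ≤ k}

/-- Consistency: if `a` is in the solution of `g`, then for every nonempty proper
subset `S` of the agents, `a_S` is in the solution of `g^{S,a}`. -/
def Consistent (φ : (g : Game n m) → Set g.Prof) : Prop :=
  ∀ g : Game n m, g.StrictUD → ∀ a ∈ φ g,
    ∀ (S : Finset (Fin n)) (hne : S.Nonempty) (hS : S ⊆ g.N), S ≠ g.N →
      g.restrict S hS a ∈ φ (g.sub S hne hS a)

/-- Converse consistency: if (in a game with at least two agents) `a_S` is in the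
solution of `g^{S,a}` for every nonempty proper subset `S` of the agents, then `a`
is in the solution of `g`. -/
def ConvConsistent (φ : (g : Game n m) → Set g.Prof) : Prop :=
  ∀ g : Game n m, g.StrictUD → 2 ≤ g.N.card → ∀ a : g.Prof,
    (∀ (S : Finset (Fin n)) (hne : S.Nonempty) (hS : S ⊆ g.N), S ≠ g.N →
      g.restrict S hS a ∈ φ (g.sub S hne hS a)) → a ∈ φ g

namespace Game

variable (g : Game n m) (S : Finset (Fin n)) (hS : S ⊆ g.N) (a : g.Prof)

lemma extend_restrict : g.extend S a (g.restrict S hS a) = a := by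
  funext j
  by_cases hj : j.1 ∈ S <;> simp [extend, restrict, hj]

lemma extend_update (b : (j : S) → g.A j.1) (i : S) (x : g.A i.1) :
    g.extend S a (Function.update b i x) =
      Function.update (g.extend S a b) ⟨i.1, hS i.2⟩ x := by
  funext j
  by_cases hji : j.1 = i.1
  · obtain ⟨j, hjN⟩ := j
    obtain ⟨i, hi⟩ := i
    subst hji
    simp [extend, hi]
  · have hne : j ≠ ⟨i.1, hS i.2⟩ := fun h => hji (congrArg Subtype.val h)
    by_cases hj : j.1 ∈ S
    · have hne' : (⟨j.1, hj⟩ : S) ≠ i := fun h => hji (congrArg Subtype.val h)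
      simp [extend, hj, hne, hne']
    · simp [extend, hj, hne]

variable (hne : S.Nonempty)

lemma rank_sub_restrict (i : (g.sub S hne hS a).N) :
    (g.sub S hne hS a).rank i (g.restrict S hS a) = g.rank ⟨i.1, hS i.2⟩ a := by
  unfold rank
  congr 1
  refine Nat.card_congr (Equiv.subtypeEquivRight fun x => ?_)
  show g.strict _ (g.extend S a (Function.update (g.restrict S hS a) i x))
      (g.extend S a (g.restrict S hS a)) ↔ _
  rw [g.extend_update S hS a _ i x, extend_restrict]

lemma strictUD_sub (hg : g.StrictUD) : (g.sub S hne hS a).StrictUD := by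
  intro i b x x' hxx'
  show g.strict _ (g.extend S a (Function.update b i x))
      (g.extend S a (Function.update b i x')) ∨
    g.strict _ (g.extend S a (Function.update b i x'))
      (g.extend S a (Function.update b i x))
  rw [g.extend_update S hS a b i x, g.extend_update S hS a b i x']
  exact hg ⟨i.1, hS i.2⟩ (g.extend S a b) x x' hxx'

lemma restrict_mem_SAT_sub {k : ℕ} (ha : a ∈ SAT k g) :
    g.restrict S hS a ∈ SAT k (g.sub S hne hS a) := fun i =>
  (g.rank_sub_restrict S hS a hne i).trans_le (ha _)

end Game

theorem stmt7_general (k : ℕ)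
    (φ : (g : Game n m) → Set g.Prof)
    (h1 : OnePersonSat k φ) (h2 : ConvConsistent φ) :
    ∀ g : Game n m, g.StrictUD → ∀ a ∈ SAT k g, a ∈ φ g := by
  intro g
  induction hc : g.N.card using Nat.strong_induction_on generalizing g with
  | _ c ih =>
    intro hg a ha
    have hpos : 0 < c := hc ▸ g.Nne.card_pos
    rcases (by omega : c = 1 ∨ 2 ≤ c) with hone | htwo
    · rw [h1 g hg (hc.trans hone)]
      exact ha
    · refine h2 g hg (hc ▸ htwo) a fun S hne hS hSN => ?_
      exact ih S.card (hc ▸ Finset.card_lt_card (hS.ssubset_of_ne hSN)) _ rfl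
        (g.strictUD_sub S hS a hne hg) _ (g.restrict_mem_SAT_sub S hS a hne ha)

/-- if a solution `φ` on `Γ_{n,m}` satisfies one-person `k`-satisficing
behavior and converse consistency, then every `(k,…,k)`-satisficing equilibrium of
`g` belongs to `φ(g)`, for every `g ∈ Γ_{n,m}`. -/
theorem stmt7 (hn : 1 ≤ n) (hm : 2 ≤ m) (k : ℕ) (hk : 1 ≤ k)
    (φ : (g : Game n m) → Set g.Prof)
    (h1 : OnePersonSat k φ) (h2 : ConvConsistent φ) :
    ∀ g : Game n m, g.StrictUD → ∀ a ∈ SAT k g, a ∈ φ g :=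
  stmt7_general k φ h1 h2

end Solutions
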